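/- Let P be a left cancellative right LCM monoid that is not left reversible, let F be a finite index set, F' ⊆ F nonempty, and let ξ be an ultrafilter in the semilattice of principal right ideals of P (with zero adjoined for the empty set) such that r_f P ∈ ξ for all f ∈ F' and r_g P ∉ ξ for all g ∈ F \ F'. Then there exists b ∈ P with bP ∈ ξ such that bP ⊆ r_f P for all f ∈ F' and bP ∩ r_g P = ∅ for all g ∈ F \ F'. -/
import Mathlib


def rIdeal {P : Type*} [Monoid P] (p : P) : Set P := {x | ∃ y, x = p * y}

/-- A filter in the semilattice of principal right ideals of `P` (with zero
`∅` adjoined): a nonempty collection of principal right ideals not containing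
`∅`, upward closed among principal right ideals, and closed under pairwise
intersections. -/
def IsIdealFilter {P : Type*} [Monoid P] (ξ : Set (Set P)) : Prop :=
  ξ.Nonempty ∧ ∅ ∉ ξ ∧ (∀ I ∈ ξ, ∃ p : P, I = rIdeal p) ∧
  (∀ I ∈ ξ, ∀ p : P, I ⊆ rIdeal p → rIdeal p ∈ ξ) ∧
  (∀ I ∈ ξ, ∀ J ∈ ξ, I ∩ J ∈ ξ)

/-- An ultrafilter: a maximal filter of principal right ideals. -/
def IsIdealUltrafilter {P : Type*} [Monoid P] (ξ : Set (Set P)) : Prop :=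
  IsIdealFilter ξ ∧ ∀ η : Set (Set P), IsIdealFilter η → ξ ⊆ η → η = ξ

lemma mem_rIdeal_self {P : Type*} [Monoid P] (p : P) : p ∈ rIdeal p :=
  ⟨1, (mul_one p).symm⟩

/-- Exel's Lemma 12.3: an ideal not in an ultrafilter is disjoint from some
member of the ultrafilter. -/
lemma ultra_disjoint {P : Type*} [Monoid P]
    (hLCM : ∀ p q : P, rIdeal p ∩ rIdeal q = ∅ ∨ ∃ r : P, rIdeal p ∩ rIdeal q = rIdeal r)
    {ξ : Set (Set P)} (hξ : IsIdealUltrafilter ξ) (p : P) (hp : rIdeal p ∉ ξ) :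
    ∃ I ∈ ξ, I ∩ rIdeal p = ∅ := by
  by_contra h
  push_neg at h
  obtain ⟨hfil, hmax⟩ := hξ
  obtain ⟨hne, hempty, hprinc, hup, hinter⟩ := hfil
  set η : Set (Set P) :=
    {J | ∃ q : P, J = rIdeal q ∧ ∃ I ∈ ξ, I ∩ rIdeal p ⊆ J} with hη
  have hsub : ξ ⊆ η := by
    intro I hI
    obtain ⟨q, hq⟩ := hprinc I hI
    exact ⟨q, hq, I, hI, fun x hx => hx.1⟩
  have hηfil : IsIdealFilter η := by
    refine ⟨?_, ?_, ?_, ?_, ?_⟩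
    · obtain ⟨I0, hI0⟩ := hne
      exact ⟨rIdeal p, p, rfl, I0, hI0, fun x hx => hx.2⟩
    · rintro ⟨q, hq, -⟩
      have := mem_rIdeal_self q
      rw [← hq] at this
      exact this
    · rintro J ⟨q, hq, -⟩
      exact ⟨q, hq⟩
    · rintro J ⟨q, hq, I, hI, hsub'⟩ q' hq'
      exact ⟨q', rfl, I, hI, fun x hx => hq' (hsub' hx)⟩
    · rintro J1 ⟨q1, rfl, I1, hI1, hs1⟩ J2 ⟨q2, rfl, I2, hI2, hs2⟩
      rcases hLCM q1 q2 with hd | ⟨s, hs⟩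
      · exfalso
        obtain ⟨x, hx⟩ := h (I1 ∩ I2) (hinter I1 hI1 I2 hI2)
        have : x ∈ rIdeal q1 ∩ rIdeal q2 :=
          ⟨hs1 ⟨hx.1.1, hx.2⟩, hs2 ⟨hx.1.2, hx.2⟩⟩
        rw [hd] at this
        exact this
      · refine ⟨s, hs, I1 ∩ I2, hinter I1 hI1 I2 hI2, ?_⟩
        intro x hx
        exact ⟨hs1 ⟨hx.1.1, hx.2⟩, hs2 ⟨hx.1.2, hx.2⟩⟩
  have heq := hmax η hηfil hsub
  apply hp
  rw [← heq]
  obtain ⟨I0, hI0⟩ := hne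
  exact ⟨p, rfl, I0, hI0, fun x hx => hx.2⟩

lemma filter_biInter {P : Type*} [Monoid P] {ξ : Set (Set P)}
    (hξ : IsIdealFilter ξ) {ι : Type*} (T : Finset ι) (hT : T.Nonempty)
    (J : ι → Set P) (hJ : ∀ i ∈ T, J i ∈ ξ) : (⋂ i ∈ T, J i) ∈ ξ := by
  classical
  induction T using Finset.induction_on with
  | empty => exact absurd hT (by simp)
  | @insert a T ha ih =>
    rw [Finset.set_biInter_insert]
    rcases T.eq_empty_or_nonempty with rfl | hTne
    · simpa using hJ a (by simp)
    · exact hξ.2.2.2.2 _ (hJ a (by simp)) _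
        (ih hTne (fun i hi => hJ i (Finset.mem_insert_of_mem hi)))

/-- In a non-left-reversible right LCM monoid, given an
ultrafilter `ξ` containing `r_f P` for `f ∈ F'` and omitting `r_g P` for
`g ∈ F \ F'`, there is `b` with `bP ∈ ξ`, `bP ⊆ r_f P` for `f ∈ F'`, and
`bP ∩ r_g P = ∅` for `g ∈ F \ F'`. -/
theorem exists_separating_ideal {P : Type*} [Monoid P]
    (hcanc : ∀ p x y : P, p * x = p * y → x = y)
    (hLCM : ∀ p q : P, rIdeal p ∩ rIdeal q = ∅ ∨ ∃ r : P, rIdeal p ∩ rIdeal q = rIdeal r)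
    (hnotrev : ∃ p q : P, rIdeal p ∩ rIdeal q = ∅)
    {ι : Type*} [DecidableEq ι] (F F' : Finset ι) (hF' : F' ⊆ F) (hF'ne : F'.Nonempty)
    (r : ι → P) (ξ : Set (Set P)) (hξ : IsIdealUltrafilter ξ)
    (hin : ∀ f ∈ F', rIdeal (r f) ∈ ξ)
    (hout : ∀ g ∈ F \ F', rIdeal (r g) ∉ ξ) :
    ∃ b : P, rIdeal b ∈ ξ ∧ (∀ f ∈ F', rIdeal b ⊆ rIdeal (r f)) ∧
      ∀ g ∈ F \ F', rIdeal b ∩ rIdeal (r g) = ∅ := by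
  classical
  have hdis : ∀ g ∈ F \ F', ∃ I ∈ ξ, I ∩ rIdeal (r g) = ∅ :=
    fun g hg => ultra_disjoint hLCM hξ (r g) (hout g hg)
  choose I hIξ hId using hdis
  set J : ι → Set P := fun i =>
    if h : i ∈ F \ F' then I i h else rIdeal (r i) with hJdef
  have hJξ : ∀ i ∈ F, J i ∈ ξ := by
    intro i hi
    by_cases h : i ∈ F \ F'
    · simp only [hJdef, dif_pos h]; exact hIξ i h
    · have hi' : i ∈ F' := by
        by_contra h'
        exact h (Finset.mem_sdiff.mpr ⟨hi, h'⟩)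
      simp only [hJdef, dif_neg h]; exact hin i hi'
  have hFne : F.Nonempty := hF'ne.mono hF'
  have hbig : (⋂ i ∈ F, J i) ∈ ξ := filter_biInter hξ.1 F hFne J hJξ
  obtain ⟨b, hb⟩ := hξ.1.2.2.1 _ hbig
  refine ⟨b, hb ▸ hbig, ?_, ?_⟩
  · intro f hf x hx
    have hfn : f ∉ F \ F' := by simp [Finset.mem_sdiff, hf]
    have hx' : x ∈ ⋂ i ∈ F, J i := by rw [hb]; exact hx
    have hxf : x ∈ J f := Set.mem_iInter₂.mp hx' f (hF' hf)
    simpa only [hJdef, dif_neg hfn] using hxf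
  · intro g hg
    rw [Set.eq_empty_iff_forall_notMem]
    rintro x ⟨hx1, hx2⟩
    have hx' : x ∈ ⋂ i ∈ F, J i := by rw [hb]; exact hx1
    have hxg : x ∈ J g := Set.mem_iInter₂.mp hx' g (Finset.mem_sdiff.mp hg).1
    rw [hJdef] at hxg
    simp only [dif_pos hg] at hxg
    have : x ∈ I g hg ∩ rIdeal (r g) := ⟨hxg, hx2⟩
    rw [hId g hg] at this
    exact this
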